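/- arXiv:1003.3189 — 3 statements merged into one kernel-verified Lean document; each statement's English description precedes it below -/
import Mathlib

section
/- For every ordinal α < ℵ_{ω+1} and every family (a_β)_{β<α} of countably infinite subsets of ℵ_ω, there exists a countably infinite set a ⊆ ℵ_ω such that a \ a_β is infinite for every β < α. -/
/-- `a` is a countably infinite subset of `ℵ_ω`, viewed as the set of
ordinals below the initial ordinal of `ℵ_ω`. -/
def MemAlephOmegaOmega (a : Set Ordinal.{0}) : Prop :=
  a ⊆ Set.Iio (Cardinal.aleph Ordinal.omega0).ord ∧ a.Countable ∧ a.Infinite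

/-!
Since `|α| ≤ ℵ_ω`, the family can be reindexed injectively by ordinals below `ω_ω`. The sets
with index below `ω_n` have a union of size at most `ℵ_n`, so some `x_n ∈ [ω_n, ω_{n+1})` avoids
all of them. Then `{x_n | n ∈ ℕ}` works: a set with index below `ω_m` misses every `x_k`, `k ≥ m`.
-/

open Cardinal Ordinal Set

universe u

theorem Set.infinite_range_diff_of_eventually_notMem {α : Type*} {x : ℕ → α}
    (hx : Function.Injective x) {A : Set α} (h : ∀ᶠ k in Filter.atTop, x k ∉ A) :
    (range x \ A).Infinite := by
  obtain ⟨m, hm⟩ := Filter.eventually_atTop.1 h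
  refine ((Ici_infinite m).image hx.injOn).mono ?_
  rintro _ ⟨k, hk, rfl⟩
  exact ⟨mem_range_self k, hm k hk⟩

namespace Ordinal

theorem exists_natCast_lt_omega_of_lt_omega_omega0 {o : Ordinal} (h : o < ω_ ω) :
    ∃ n : ℕ, o < ω_ n := by
  obtain ⟨b, hb, hob⟩ := (isNormal_omega.lt_iff_exists_lt isSuccLimit_omega0).1 h
  obtain ⟨n, rfl⟩ := lt_omega0.1 hb
  exact ⟨n, hob⟩

theorem exists_mem_Ico_omega_notMem {o : Ordinal.{u}} {S : Set Ordinal.{u}}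
    (hS : #S ≤ Cardinal.lift.{u + 1} (ℵ_ o)) : ∃ x ∈ Ico (ω_ o) (ω_ (o + 1)), x ∉ S := by
  by_contra! h
  have hsub : Iio (ω_ (o + 1)) ⊆ Iio (ω_ o) ∪ S := fun x hx =>
    (lt_or_ge x (ω_ o)).imp id fun hox => h x ⟨hox, hx⟩
  have hle := (mk_le_mk_of_subset hsub).trans ((mk_union_le _ _).trans (add_le_add_right hS _))
  rw [Cardinal.mk_Iio_ordinal, Cardinal.mk_Iio_ordinal, card_omega, card_omega,
    ← Cardinal.lift_add, Cardinal.lift_le, add_eq_self (aleph0_le_aleph o), ← succ_aleph] at hle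
  exact (Order.lt_succ_of_not_isMax (not_isMax _)).not_ge hle

theorem exists_injective_lt_of_card_le {o o' : Ordinal.{u}} (h : o.card ≤ o'.card) :
    ∃ r : Iio o → Ordinal.{u}, Function.Injective r ∧ ∀ b, r b < o' := by
  obtain ⟨f⟩ : #(Iio o) ≤ #(Iio o') := by
    rwa [Cardinal.mk_Iio_ordinal, Cardinal.mk_Iio_ordinal, Cardinal.lift_le]
  exact ⟨fun b => f b, Subtype.val_injective.comp f.injective, fun b => (f b).2⟩

theorem exists_strictMono_infinite_range_diff (A : Ordinal.{u} → Set Ordinal.{u})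
    (hA : ∀ j < ω_ ω, (A j).Countable) :
    ∃ x : ℕ → Ordinal.{u}, StrictMono x ∧ (∀ n, x n < ω_ ω) ∧
      ∀ j < ω_ ω, (range x \ A j).Infinite := by
  have hω : ∀ n : ℕ, ω_ n < ω_ ω := fun n => omega_lt_omega.2 (natCast_lt_omega0 n)
  have hbad (n : ℕ) : #(⋃ j < ω_ n, A j) ≤ Cardinal.lift.{u + 1} (ℵ_ (n : Ordinal.{u})) :=
    mk_biUnion_le_of_le_lift (by simp) (by simp) A fun j hj =>
      (hA j (hj.trans (hω n))).le_aleph0.trans (by simp)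
  choose x hx hxA using fun n : ℕ => exists_mem_Ico_omega_notMem (hbad n)
  have hmono : StrictMono x :=
    strictMono_nat_of_lt_succ fun n => (hx n).2.trans_le (by simpa using (hx (n + 1)).1)
  refine ⟨x, hmono, fun n => (hx n).2.trans (by exact_mod_cast hω (n + 1)), fun j hj => ?_⟩
  obtain ⟨m, hm⟩ := exists_natCast_lt_omega_of_lt_omega_omega0 hj
  refine infinite_range_diff_of_eventually_notMem hmono.injective
    (Filter.eventually_atTop.2 ⟨m, fun k hk hxk => hxA k (mem_biUnion ?_ hxk)⟩)
  exact hm.trans_le (omega_le_omega.2 (by exact_mod_cast hk))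

end Ordinal

/-- For every ordinal `α < ℵ_{ω+1}` and every family `(a_β)_{β<α}` of countably infinite
subsets of `ℵ_ω`, there is a countably infinite `a ⊆ ℵ_ω` with `a \ a_β` infinite for all
`β < α`. -/
theorem stmt0 (α : Ordinal.{0}) (hα : α < (Cardinal.aleph (Ordinal.omega0 + 1)).ord)
    (a : ∀ β : Ordinal, β < α → Set Ordinal)
    (ha : ∀ (β : Ordinal) (hβ : β < α), MemAlephOmegaOmega (a β hβ)) :
    ∃ c : Set Ordinal, MemAlephOmegaOmega c ∧
      ∀ (β : Ordinal) (hβ : β < α), (c \ a β hβ).Infinite := by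
  have hcard : α.card ≤ (ω_ ω).card := by
    rwa [card_omega, ← Order.lt_succ_iff, succ_aleph, ← lt_omega_iff_card_lt, ← ord_aleph]
  obtain ⟨r, hr, hrω⟩ := exists_injective_lt_of_card_le hcard
  set A := Function.extend r (fun b : Iio α => a b.1 b.2) fun _ => ∅
  have hA (j : Ordinal) : (A j).Countable := by
    by_cases hj : ∃ b, r b = j
    · obtain ⟨b, rfl⟩ := hj
      rw [show A (r b) = _ from hr.extend_apply _ _ b]
      exact (ha b.1 b.2).2.1
    · rw [show A j = ∅ from Function.extend_apply' _ _ _ hj]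
      exact countable_empty
  obtain ⟨x, hx, hxω, hxA⟩ := exists_strictMono_infinite_range_diff A fun j _ => hA j
  refine ⟨range x, ⟨?_, countable_range x, infinite_range_of_injective hx.injective⟩,
    fun β hβ => ?_⟩
  · rintro _ ⟨n, rfl⟩
    rw [mem_Iio, ord_aleph]
    exact hxω n
  · simpa [A, hr.extend_apply] using hxA (r ⟨β, hβ⟩) (hrω _)
end

section
/- Assume (ℵ_ω)^ω = ℵ_{ω+1} and Chang's conjecture (ℵ_{ω+1}, ℵ_ω) ↠ (ℵ_1, ℵ_0). If 𝒟 is cofinal in ([ℵ_ω]^ω, ⊆), then there exists A ∈ [ℵ_ω]^ω such that |𝒟 ∩ 𝒫(A)| > ℵ_0, i.e., uncountably many members of 𝒟 are subsets of A. -/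
/-- Chang's conjecture `(ℵ_{ω+1}, ℵ_ω) ↠ (ℵ_1, ℵ_0)`: every structure in a countable
language on a set of size `ℵ_{ω+1}` with a distinguished subset of size `ℵ_ω` has an
elementary substructure of size `ℵ_1` meeting the distinguished set in a set of size `ℵ_0`. -/
def ChangsConjecture : Prop :=
  ∀ (L : FirstOrder.Language.{0, 0}) (M : Type) [inst : L.Structure M],
    L.card ≤ Cardinal.aleph0 →
    Cardinal.mk M = Cardinal.aleph (Ordinal.omega0 + 1) →
    ∀ U : Set M, Cardinal.mk U = Cardinal.aleph Ordinal.omega0 →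
      ∃ S : L.ElementarySubstructure M,
        Cardinal.mk S = Cardinal.aleph 1 ∧
        Cardinal.mk (((S : FirstOrder.Language.Substructure L M) : Set M) ∩ U : Set M) =
          Cardinal.aleph0

/-!
A cofinal `𝒟 ⊆ [ℵ_ω]^ω` has size exactly `ℵ_{ω+1}`: at most `(ℵ_ω)^ω = ℵ_{ω+1}`, and more than
`ℵ_ω` because `ℵ_ω` has countable cofinality, so any `ℵ_ω` countable sets can be diagonalised
against along the `ℵ_n`. Make `𝒟` into a structure with an injected copy of `ℵ_ω` as the
distinguished set and, for each `k`, a unary function sending `d` to the copy of its `k`-th element.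
Chang's conjecture yields a closed `S ⊆ 𝒟` of size `ℵ_1` meeting the copy of `ℵ_ω` in a countable
set `A`; closure under the functions puts every `d ∈ S` inside `A`.
-/

open Cardinal Ordinal Set

universe u v

theorem lt_ord_aleph_omega0_iff {β : Ordinal} : β < (ℵ_ ω).ord ↔ ∃ n : ℕ, β < (ℵ_ n).ord := by
  refine ⟨fun hβ => ?_, fun ⟨n, hn⟩ =>
    hn.trans (ord_lt_ord.mpr (aleph_lt_aleph.mpr (natCast_lt_omega0 n)))⟩
  obtain ⟨a, ha, hβa⟩ := (isNormal_aleph.lt_iff_exists_lt isSuccLimit_omega0).mp (lt_ord.mp hβ)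
  obtain ⟨n, rfl⟩ := lt_omega0.mp ha
  exact ⟨n, lt_ord.mpr hβa⟩

theorem exists_mem_Ico_ord_succ_notMem {c : Cardinal.{u}} (hc : ℵ₀ ≤ c) {T : Set Ordinal.{u}}
    (hT : #T ≤ lift.{u + 1} c) : ∃ x ∈ Ico c.ord (Order.succ c).ord, x ∉ T := by
  by_contra! h
  have hsub : Iio (Order.succ c).ord ⊆ T ∪ Iio c.ord := fun x hx =>
    (lt_or_ge x c.ord).elim Or.inr fun hcx => Or.inl (h x ⟨hcx, hx⟩)
  have hle := (mk_le_mk_of_subset hsub).trans (mk_union_le _ _)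
  rw [Cardinal.mk_Iio_ordinal, Cardinal.mk_Iio_ordinal, card_ord, card_ord] at hle
  refine (lift_lt.mpr (Order.lt_succ c)).not_ge (hle.trans ?_)
  calc #T + lift c ≤ lift c + lift c := by gcongr
    _ = lift c := add_eq_self (aleph0_le_lift.mpr hc)

theorem exists_not_subset_of_mk_le_aleph_omega0 (D : Set (Set Ordinal.{0}))
    (hD : ∀ d ∈ D, d.Countable) (hDcard : #D ≤ ℵ_ ω) :
    ∃ a, MemAlephOmegaOmega a ∧ ∀ d ∈ D, ¬ a ⊆ d := by
  obtain ⟨r⟩ : Nonempty (D ↪ Iio (ℵ_ ω).ord) := by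
    rw [← le_def, Cardinal.mk_Iio_ordinal, card_ord]
    simpa using hDcard
  let T (n : ℕ) : Set Ordinal := ⋃ d ∈ {d : D | (r d : Ordinal) < (ℵ_ n).ord}, (d : Set Ordinal)
  have hT (n : ℕ) : #(T n) ≤ lift.{1} (ℵ_ n : Cardinal.{0}) := by
    have hs : #{d : D | (r d : Ordinal) < (ℵ_ n).ord} ≤ lift.{1} (ℵ_ n : Cardinal.{0}) := by
      refine (mk_le_of_injective (f := fun d => (⟨r d.1, d.2⟩ : Iio (ℵ_ n).ord))
        fun _ _ h => Subtype.ext (r.injective (Subtype.ext (Subtype.mk.inj h)))).trans_eq ?_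
      rw [Cardinal.mk_Iio_ordinal, card_ord]
    calc #(T n) ≤ _ := mk_biUnion_le _ _
      _ ≤ lift.{1} (ℵ_ n : Cardinal.{0}) * ℵ₀ :=
        mul_le_mul' hs (ciSup_le' fun d => le_aleph0_iff_set_countable.mpr (hD _ d.1.2))
      _ = lift.{1} (ℵ_ n : Cardinal.{0}) :=
        mul_aleph0_eq (aleph0_le_lift.mpr (aleph0_le_aleph n))
  -- `x n` avoids every member of `D` of rank below `ℵ_n`; the windows `[ℵ_n, ℵ_{n+1})`
  -- make `x` strictly increasing.
  choose x hx hxT using fun n : ℕ => exists_mem_Ico_ord_succ_notMem (aleph0_le_aleph n) (hT n)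
  have hx_lt (n : ℕ) : x n < (ℵ_ (n + 1 : ℕ)).ord := by
    rw [Nat.cast_succ, ← succ_aleph]
    exact (hx n).2
  have hmono : StrictMono x :=
    strictMono_nat_of_lt_succ fun n => (hx_lt n).trans_le (hx (n + 1)).1
  refine ⟨range x, ⟨?_, countable_range x, infinite_range_of_injective hmono.injective⟩, ?_⟩
  · rintro _ ⟨n, rfl⟩
    exact lt_ord_aleph_omega0_iff.mpr ⟨n + 1, hx_lt n⟩
  · intro d hd hsub
    obtain ⟨n, hn⟩ := lt_ord_aleph_omega0_iff.mp (r ⟨d, hd⟩).2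
    exact hxT n (mem_biUnion (x := ⟨d, hd⟩) hn (hsub (mem_range_self n)))

theorem aleph_omega0_lt_mk_of_cofinal (D : Set (Set Ordinal.{0}))
    (hD : ∀ d ∈ D, MemAlephOmegaOmega d) (hcof : ∀ a, MemAlephOmegaOmega a → ∃ d ∈ D, a ⊆ d) :
    ℵ_ ω < #D := by
  by_contra! h
  obtain ⟨a, ha, hna⟩ := exists_not_subset_of_mk_le_aleph_omega0 D (fun d hd => (hD d hd).2.1) h
  obtain ⟨d, hd, had⟩ := hcof a ha
  exact hna d hd had

theorem aleph_omega0_pow_aleph0_eq_of_eq_univ (h : (ℵ_ ω ^ ℵ₀ : Cardinal.{u}) = ℵ_ (ω + 1)) :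
    (ℵ_ ω ^ ℵ₀ : Cardinal.{v}) = ℵ_ (ω + 1) :=
  lift_injective.{u} (by simpa using congrArg Cardinal.lift.{v} h)

theorem mk_le_aleph_omega0_pow (D : Set (Set Ordinal.{0}))
    (hD : ∀ d ∈ D, MemAlephOmegaOmega d) : #D ≤ ℵ_ ω ^ ℵ₀ :=
  calc #D ≤ #{t : Set Ordinal // t ⊆ Iio (ℵ_ ω).ord ∧ #t ≤ ℵ₀} :=
        mk_le_of_injective (f := fun d => ⟨d, (hD d d.2).1,
          le_aleph0_iff_set_countable.mpr (hD d d.2).2.1⟩)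
          fun d d' h => Subtype.ext (by simpa using congrArg Subtype.val h)
    _ ≤ max #(Iio (ℵ_ ω).ord) ℵ₀ ^ ℵ₀ := mk_bounded_subset_le _ _
    _ = ℵ_ ω ^ ℵ₀ := by simp [Cardinal.mk_Iio_ordinal]

/-- Unary function symbols indexed by `ι`. In arity `n` the symbols are the pairs `(k, i)`,
interpreted as `v ↦ F k (v i)`; this avoids a case split on the arity and leaves arity `0` empty. -/
def unaryLanguage (ι : Type) : FirstOrder.Language.{0, 0} :=
  ⟨fun n => ι × Fin n, fun _ => Empty⟩

abbrev unaryLanguage.mkStructure {ι : Type} {M : Type u} (F : ι → M → M) :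
    (unaryLanguage ι).Structure M where
  funMap ki v := F ki.1 (v ki.2)
  RelMap r := Empty.elim r

theorem unaryLanguage.card_le_aleph0 (ι : Type) [Countable ι] :
    (unaryLanguage ι).card ≤ ℵ₀ :=
  mk_le_aleph0_iff.mpr (inferInstanceAs (Countable ((Σ n, ι × Fin n) ⊕ (Σ _ : ℕ, Empty))))

theorem ChangsConjecture.exists_invariant' (hcc : ChangsConjecture) {ι : Type} [Countable ι]
    {M : Type} (hM : #M = ℵ_ (ω + 1)) (U : Set M) (hU : #U = ℵ_ ω) (F : ι → M → M) :
    ∃ S : Set M, (∀ k, MapsTo (F k) S S) ∧ #S = ℵ_ 1 ∧ #(S ∩ U : Set M) = ℵ₀ := by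
  let _ := unaryLanguage.mkStructure F
  obtain ⟨S, hS, hSU⟩ := hcc (unaryLanguage ι) M (unaryLanguage.card_le_aleph0 ι) hM U hU
  exact ⟨S, fun k x hx => S.toSubstructure.fun_mem (k, (0 : Fin 1)) ![x] (by simpa), hS, hSU⟩

theorem ChangsConjecture.exists_invariant (hcc : ChangsConjecture) {ι : Type} [Countable ι]
    {M : Type u} (hM : #M = ℵ_ (ω + 1)) (U : Set M) (hU : #U = ℵ_ ω) (F : ι → M → M) :
    ∃ S : Set M, (∀ k, MapsTo (F k) S S) ∧ #S = ℵ_ 1 ∧ #(S ∩ U : Set M) = ℵ₀ := by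
  obtain ⟨e⟩ : Nonempty (M ≃ (ℵ_ (ω + 1) : Cardinal.{0}).out) := lift_mk_eq'.mp (by simp [hM])
  obtain ⟨S, hSF, hS, hSU⟩ := hcc.exists_invariant' (mk_out _) (e '' U)
    (lift_injective.{u} (by simp [mk_image_eq_lift _ _ e.injective, hU]))
    (fun k => e ∘ F k ∘ e.symm)
  refine ⟨e ⁻¹' S, fun k x hx => by simpa using hSF k hx, ?_, ?_⟩
  · simpa [hS] using mk_preimage_equiv_lift e S
  · simpa [hSU] using mk_preimage_equiv_lift e (S ∩ e '' U)

theorem ChangsConjecture.exists_not_countable_of_mk_eq (hcc : ChangsConjecture)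
    (D : Set (Set Ordinal.{0})) (hD : ∀ d ∈ D, MemAlephOmegaOmega d) (hDcard : #D = ℵ_ (ω + 1)) :
    ∃ A, MemAlephOmegaOmega A ∧ ¬ {d ∈ D | d ⊆ A}.Countable := by
  obtain ⟨ι⟩ : Nonempty (Iio (ℵ_ ω).ord ↪ D) := by
    rw [← le_def, Cardinal.mk_Iio_ordinal, card_ord, hDcard, lift_aleph, lift_omega0]
    exact aleph_le_aleph.mpr le_self_add
  choose g hg using fun d : D => (hD d d.2).2.1.exists_eq_range (hD d d.2).2.2.nonempty
  have hg_lt (d : D) (k : ℕ) : g d k < (ℵ_ ω).ord :=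
    (hD d d.2).1 (by rw [hg d]; exact mem_range_self k)
  obtain ⟨S, hSF, hS, hSU⟩ := hcc.exists_invariant hDcard (range ι)
    (by rw [mk_range_eq _ ι.injective, Cardinal.mk_Iio_ordinal, card_ord]; simp)
    (fun k d => ι ⟨g d k, hg_lt d k⟩)
  set A := Subtype.val '' (ι ⁻¹' S)
  have hA : #A = ℵ₀ := by
    rw [mk_image_eq Subtype.val_injective, ← preimage_inter_range,
      mk_preimage_of_injective_of_subset_range _ _ ι.injective inter_subset_right, hSU]
  have hsub : ∀ d ∈ S, (d : Set Ordinal) ⊆ A := by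
    rintro d hd _ hβ
    rw [hg d] at hβ
    obtain ⟨k, rfl⟩ := hβ
    exact ⟨⟨g d k, hg_lt d k⟩, hSF k hd, rfl⟩
  refine ⟨A, ⟨image_subset_iff.mpr fun β _ => β.2, le_aleph0_iff_set_countable.mp hA.le,
    infinite_coe_iff.mp (aleph0_le_mk_iff.mp hA.ge)⟩, fun hcount => ?_⟩
  have hS_countable : S.Countable := MapsTo.countable_of_injOn (f := Subtype.val)
    (t := {d ∈ D | d ⊆ A}) (fun d hd => ⟨d.2, hsub d hd⟩) Subtype.val_injective.injOn hcount
  exact aleph0_lt_aleph_one.not_ge (hS ▸ le_aleph0_iff_set_countable.mpr hS_countable)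

/-- If `(ℵ_ω)^ω = ℵ_{ω+1}` and Chang's conjecture `(ℵ_{ω+1}, ℵ_ω) ↠ (ℵ_1, ℵ_0)` holds,
then for every cofinal `𝒟 ⊆ [ℵ_ω]^ω` there is `A ∈ [ℵ_ω]^ω` such that uncountably many
members of `𝒟` are subsets of `A`. -/
theorem stmt5
    (hpow : Cardinal.aleph Ordinal.omega0 ^ Cardinal.aleph0 =
      Cardinal.aleph (Ordinal.omega0 + 1))
    (hcc : ChangsConjecture)
    (D : Set (Set Ordinal.{0})) (hD : ∀ d ∈ D, MemAlephOmegaOmega d)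
    (hcof : ∀ a, MemAlephOmegaOmega a → ∃ d ∈ D, a ⊆ d) :
    ∃ A, MemAlephOmegaOmega A ∧ ¬ {d ∈ D | d ⊆ A}.Countable := by
  have hpow₁ : (ℵ_ ω ^ ℵ₀ : Cardinal.{1}) = ℵ_ (ω + 1) :=
    aleph_omega0_pow_aleph0_eq_of_eq_univ hpow
  have hDcard : #D = ℵ_ (ω + 1) := by
    refine le_antisymm (hpow₁ ▸ mk_le_aleph_omega0_pow D hD) ?_
    rw [← succ_aleph, Order.succ_le_iff]
    exact aleph_omega0_lt_mk_of_cofinal D hD hcof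
  exact hcc.exists_not_countable_of_mk_eq D hD hDcard
end

section
/- Let 𝒜' = (A', U', ≤', ...) be an elementary substructure of a structure on ℵ_{ω+1} (with its natural order ≤ and a fixed function g : ℵ_{ω+1} × ℵ_{ω+1} → ℵ_ω such that g(α,·)↾α is injective for each α) with |A'| = ℵ_1 and |U'| = ℵ_0, where U' = A' ∩ ℵ_ω. Then the order type of (A', ≤) is exactly ω_1; in particular every proper initial segment of A' is countable. -/
/-! For `α ∈ A'`, closure under `g` makes `g(α,·)` an injection of `A' ∩ α` into the countable
set `U'`, so every proper initial segment of `A'` is countable. A well-order all of whose proper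
initial segments are countable has type at most `ω₁`, and `|A'| = ℵ₁` gives the reverse
inequality. -/

open Cardinal Ordinal Set

theorem Ordinal.type_subrel_le_aleph_one_ord {A : Set Ordinal}
    (h : ∀ α ∈ A, (A ∩ Iio α).Countable) :
    type (Subrel LT.lt (· ∈ A)) ≤ (aleph 1).ord := by
  refine le_of_forall_lt fun o ho => ?_
  obtain ⟨x, rfl⟩ := typein_surj _ ho
  have hseg : Countable {y // Subrel LT.lt (· ∈ A) y x} := by
    have : Countable (A ∩ Iio x.1 : Set Ordinal) := (h x x.2).to_subtype
    exact Function.Injective.countable (f := fun y => (⟨y.1.1, y.1.2, y.2⟩ : ↥(A ∩ Iio x.1)))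
      fun a b hab => Subtype.ext (Subtype.ext (congrArg Subtype.val hab :))
  rw [lt_ord, card_typein]
  exact (mk_le_aleph0_iff.2 hseg).trans_lt aleph0_lt_aleph_one

/-- Let `A' ⊆ ℵ_{ω+1}` be the universe of an elementary substructure of the structure
`(ℵ_{ω+1}, ℵ_ω, ≤, g)`, where `g(α,·)↾α` injects `α` into `ℵ_ω` for each `α < ℵ_{ω+1}`;
elementarity is expressed by closure of `A'` under `g`, and `U' = A' ∩ ℵ_ω`.
If `|A'| = ℵ_1` and `|U'| = ℵ_0`, then the order type of `A'` is exactly `ω_1`;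
in particular every proper initial segment of `A'` is countable. -/
theorem stmt6 (A' : Set Ordinal.{0})
    (hA'sub : A' ⊆ Set.Iio (Cardinal.aleph (Ordinal.omega0 + 1)).ord)
    (g : Ordinal → Ordinal → Ordinal)
    (hg : ∀ α < (Cardinal.aleph (Ordinal.omega0 + 1)).ord,
      (∀ β < α, g α β < (Cardinal.aleph Ordinal.omega0).ord) ∧ Set.InjOn (g α) (Set.Iio α))
    (hclosed : ∀ α ∈ A', ∀ β ∈ A', g α β ∈ A')
    (hcard : Cardinal.mk A' = Cardinal.aleph 1)
    (hU : Cardinal.mk (A' ∩ Set.Iio (Cardinal.aleph Ordinal.omega0).ord : Set Ordinal) =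
      Cardinal.aleph0) :
    Ordinal.type (Subrel LT.lt (· ∈ A')) = (Cardinal.aleph 1).ord ∧
      ∀ α ∈ A', (A' ∩ Set.Iio α).Countable := by
  have hUcount : (A' ∩ Iio (aleph omega0).ord).Countable := le_aleph0_iff_set_countable.1 hU.le
  have hsegments : ∀ α ∈ A', (A' ∩ Iio α).Countable := fun α hα => by
    obtain ⟨hgU, hginj⟩ := hg α (hA'sub hα)
    have hmaps : MapsTo (g α) (A' ∩ Iio α) (A' ∩ Iio (aleph omega0).ord) :=
      fun β hβ => ⟨hclosed α hα β hβ.1, hgU β hβ.2⟩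
    exact hmaps.countable_of_injOn (hginj.mono inter_subset_right) hUcount
  refine ⟨le_antisymm (type_subrel_le_aleph_one_ord hsegments) ?_, hsegments⟩
  rw [ord_le, card_type]
  exact hcard.ge
end
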